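/- Let H be a complex Hilbert space. Let (P_l)_{l∈ℕ} be a family of pairwise-orthogonal orthogonal projections which is complete (for every x ∈ H the series Σ_l P_l x converges to x), and let (Π_k)_{k∈ℕ} be another family of pairwise-orthogonal orthogonal projections. Let (h_k) be real numbers and set H_L := Σ_{k=0}^L h_k Π_k. Let n ≥ 1, and let (s_l) be strictly positive reals such that the sequence (s_l^{-n}) is nonincreasing and summable; let R be a bounded operator with R P_l = s_l^{-n} P_l for all l. Assume there are nonnegative reals (β_j) with Σ_j β_j < ∞ such that P_l Π_k = 0 whenever l < k and ‖P_{k+j} Π_k‖ ≤ β_j for all k, j ≥ 0. Then for every t ∈ ℝ and all M ≤ L: ‖R (exp(i t H_L) − exp(i t H_M))‖ ≤ 2 (Σ_{j=0}^∞ β_j) (Σ_{k=M+1}^{L} s_k^{-n}); consequently ‖R (exp(i t H_L) − exp(i t H_M))‖ → 0 as L, M → ∞. -/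

import Mathlib

/-!
Because the `Π_k` are pairwise orthogonal idempotents,
`exp (i t H_L) = 1 + Σ_{k ≤ L} (e^{i t h_k} - 1) Π_k`, so
`exp (i t H_L) - exp (i t H_M) = Σ_{M < k ≤ L} (e^{i t h_k} - 1) Π_k` with coefficients of
modulus at most `2`. Expanding `R Π_k x = Σ_{j ≥ 0} s_{k+j}^{-n} P_{k+j} Π_k x` (the terms `l < k`
vanish) and using that `s^{-n}` is nonincreasing gives `‖R Π_k‖ ≤ s_k^{-n} Σ_j β_j`. Summability
of `s^{-n}` then makes `L ↦ R exp (i t H_L)` a Cauchy sequence.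
-/

open NormedSpace Finset

theorem Finset.sum_Ioc_eq_sum_range_succ_sub {G : Type*} [AddCommGroup G] (f : ℕ → G) {M L : ℕ}
    (h : M ≤ L) : ∑ k ∈ Ioc M L, f k = ∑ k ∈ range (L + 1), f k - ∑ k ∈ range (M + 1), f k := by
  rw [← Icc_add_one_left_eq_Ioc, ← Ico_add_one_right_eq_Icc, sum_Ico_eq_sub _ (by omega)]

theorem IsIdempotentElem.exp_smul {A : Type*} [NormedRing A] [NormedAlgebra ℂ A] [CompleteSpace A]
    {p : A} (hp : IsIdempotentElem p) (c : ℂ) : exp (c • p) = 1 + (Complex.exp c - 1) • p := by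
  -- the `0 ^ m` term is the `m = 0` correction: the series splits as `exp c • p + exp 0 • (1 - p)`
  have hpow : ∀ m : ℕ, (c • p) ^ m = c ^ m • p + (0 : ℂ) ^ m • (1 - p) := by
    rintro (_ | m)
    · simp
    · simp [smul_pow, hp.pow_succ_eq]
  have hsum := ((exp_series_hasSum_exp' (𝕂 := ℂ) c).smul_const p).add
    ((exp_series_hasSum_exp' (𝕂 := ℂ) (0 : ℂ)).smul_const (1 - p))
  simp only [smul_assoc, ← smul_add, ← hpow, exp_zero, ← Complex.exp_eq_exp_ℂ] at hsum
  rw [(exp_series_hasSum_exp' (𝕂 := ℂ) (c • p)).unique hsum]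
  module

theorem exp_sum_smul_of_orthogonal {ι A : Type*} [NormedRing A] [NormedAlgebra ℂ A]
    [CompleteSpace A] {p : ι → A} (hp : ∀ i, IsIdempotentElem (p i))
    (horth : ∀ i j, i ≠ j → p i * p j = 0) (c : ι → ℂ) (s : Finset ι) :
    exp (∑ i ∈ s, c i • p i) = 1 + ∑ i ∈ s, (Complex.exp (c i) - 1) • p i := by
  classical
  -- `exp_add_of_commute` is stated for `ℚ`-algebras
  let +nondep : NormedAlgebra ℚ A := NormedAlgebra.restrictScalars ℚ ℂ A
  induction s using Finset.induction_on with
  | empty => simp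
  | insert i s hi ih =>
    have hleft : ∀ d : ι → ℂ, p i * ∑ j ∈ s, d j • p j = 0 := fun d => by
      rw [mul_sum]
      exact sum_eq_zero fun j hj => by
        rw [mul_smul_comm, horth i j (by rintro rfl; exact hi hj), smul_zero]
    have hright : ∀ d : ι → ℂ, (∑ j ∈ s, d j • p j) * p i = 0 := fun d => by
      rw [sum_mul]
      exact sum_eq_zero fun j hj => by
        rw [smul_mul_assoc, horth j i (by rintro rfl; exact hi hj), smul_zero]
    have hcomm : Commute (c i • p i) (∑ j ∈ s, c j • p j) := by
      rw [Commute, SemiconjBy, smul_mul_assoc, mul_smul_comm, hleft, hright]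
    rw [sum_insert hi, sum_insert hi, exp_add_of_commute hcomm, ih, (hp i).exp_smul,
      add_mul, one_mul, mul_add, mul_one, smul_mul_assoc, hleft, smul_zero, add_zero]
    abel

theorem norm_mul_le_of_banded {𝕜 E : Type*} [RCLike 𝕜] [NormedAddCommGroup E]
    [NormedSpace 𝕜 E] {P : ℕ → E →L[𝕜] E} (hP : ∀ x, HasSum (fun l => P l x) x)
    {R : E →L[𝕜] E} {σ : ℕ → ℝ} (hR : ∀ l, R * P l = (σ l : 𝕜) • P l)
    (hσ_nonneg : ∀ l, 0 ≤ σ l) (hσ : Antitone σ) {T : E →L[𝕜] E} {k : ℕ}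
    (hT_zero : ∀ l < k, P l * T = 0) {β : ℕ → ℝ} (hβ : Summable β)
    (hT : ∀ j, ‖P (k + j) * T‖ ≤ β j) : ‖R * T‖ ≤ σ k * ∑' j, β j := by
  have hβ_nonneg : ∀ j, 0 ≤ β j := fun j => (norm_nonneg _).trans (hT j)
  refine (R * T).opNorm_le_bound (mul_nonneg (hσ_nonneg k) (tsum_nonneg hβ_nonneg)) fun x => ?_
  have hsum : HasSum (fun l => (σ l : 𝕜) • P l (T x)) (R (T x)) :=
    (R.hasSum (hP (T x))).congr_fun fun l => (congrArg (· (T x)) (hR l)).symm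
  have hzero : ∀ l < k, P l (T x) = 0 := fun l hl => by
    simpa using congrArg (· x) (hT_zero l hl)
  have htail : HasSum (fun j => (σ (j + k) : 𝕜) • P (j + k) (T x)) (R (T x)) := by
    rwa [← hasSum_nat_add_iff' k, sum_eq_zero fun l hl => by
      rw [hzero l (mem_range.mp hl), smul_zero], sub_zero] at hsum
  have hbound : ∀ j, ‖(σ (j + k) : 𝕜) • P (j + k) (T x)‖ ≤ σ k * ‖x‖ * β j := fun j =>
    calc ‖(σ (j + k) : 𝕜) • P (j + k) (T x)‖ = σ (j + k) * ‖(P (k + j) * T) x‖ := by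
          rw [norm_smul, RCLike.norm_ofReal, abs_of_nonneg (hσ_nonneg _), add_comm]; rfl
      _ ≤ σ k * (β j * ‖x‖) :=
          mul_le_mul (hσ (by omega)) (((P (k + j) * T).le_opNorm x).trans
            (mul_le_mul_of_nonneg_right (hT j) (norm_nonneg x))) (norm_nonneg _) (hσ_nonneg k)
      _ = σ k * ‖x‖ * β j := by ring
  calc ‖(R * T) x‖ ≤ σ k * ‖x‖ * ∑' j, β j :=
        htail.norm_le_of_bounded (hβ.hasSum.mul_left _) hbound
    _ = σ k * (∑' j, β j) * ‖x‖ := by ring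

theorem Complex.norm_exp_ofReal_mul_I_sub_one_le (θ : ℝ) : ‖Complex.exp (θ * I) - 1‖ ≤ 2 := by
  calc ‖Complex.exp (θ * I) - 1‖ ≤ ‖Complex.exp (θ * I)‖ + ‖(1 : ℂ)‖ := norm_sub_le _ _
    _ = 2 := by rw [Complex.norm_exp_ofReal_mul_I, norm_one]; norm_num

theorem norm_mul_exp_sub_exp_le {A : Type*} [NormedRing A] [NormedAlgebra ℂ A]
    [CompleteSpace A] {p : ℕ → A} (hp : ∀ i, IsIdempotentElem (p i))
    (horth : ∀ i j, i ≠ j → p i * p j = 0) (θ : ℕ → ℝ) (R : A) {M L : ℕ} (hML : M ≤ L) :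
    ‖R * (exp (∑ k ∈ range (L + 1), (θ k * Complex.I) • p k) -
        exp (∑ k ∈ range (M + 1), (θ k * Complex.I) • p k))‖ ≤
      2 * ∑ k ∈ Ioc M L, ‖R * p k‖ := by
  rw [exp_sum_smul_of_orthogonal hp horth, exp_sum_smul_of_orthogonal hp horth,
    add_sub_add_left_eq_sub, ← sum_Ioc_eq_sum_range_succ_sub _ hML, mul_sum, mul_sum]
  refine (norm_sum_le _ _).trans (sum_le_sum fun k _ => ?_)
  rw [mul_smul_comm, norm_smul]
  exact mul_le_mul_of_nonneg_right (Complex.norm_exp_ofReal_mul_I_sub_one_le _) (norm_nonneg _)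

theorem cauchySeq_of_dist_le_mul_sum_Ioc {α : Type*} [PseudoMetricSpace α] {u : ℕ → α}
    {σ : ℕ → ℝ} {C : ℝ} (hσ : Summable σ) (hσ_nonneg : ∀ k, 0 ≤ σ k)
    (h : ∀ M L, M ≤ L → dist (u L) (u M) ≤ C * ∑ k ∈ Ioc M L, σ k) : CauchySeq u := by
  set S : ℕ → ℝ := fun N => ∑ k ∈ range (N + 1), σ k
  have hS : CauchySeq S :=
    (hσ.hasSum.tendsto_sum_nat.comp (Filter.tendsto_add_atTop_nat 1)).cauchySeq
  have hle : ∀ M L, M ≤ L → dist (u L) (u M) ≤ |C| * dist (S L) (S M) := fun M L hML => by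
    have hIoc := sum_nonneg fun k (_ : k ∈ Ioc M L) => hσ_nonneg k
    rw [Real.dist_eq, ← sum_Ioc_eq_sum_range_succ_sub _ hML, abs_of_nonneg hIoc]
    exact (h M L hML).trans (mul_le_mul_of_nonneg_right (le_abs_self C) hIoc)
  rw [Metric.cauchySeq_iff] at hS ⊢
  intro ε hε
  obtain ⟨N, hN⟩ := hS (ε / (|C| + 1)) (by positivity)
  refine ⟨N, fun L hL M hM => ?_⟩
  have hLM : dist (u L) (u M) ≤ |C| * dist (S L) (S M) := by
    rcases le_total M L with hML | hLM
    · exact hle M L hML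
    · rw [dist_comm, dist_comm (S L)]
      exact hle L M hLM
  calc dist (u L) (u M) ≤ (|C| + 1) * dist (S L) (S M) := hLM.trans (by gcongr; linarith)
    _ < (|C| + 1) * (ε / (|C| + 1)) := by gcongr; exact hN L hL M hM
    _ = ε := by field_simp

theorem stmt_18_general {H : Type*} [NormedAddCommGroup H] [InnerProductSpace ℂ H] [CompleteSpace H]
    (P : ℕ → H →L[ℂ] H)
    (hP_complete : ∀ x : H, HasSum (fun l => P l x) x)
    (Pi2 : ℕ → H →L[ℂ] H)
    (hPi2_idem : ∀ k, Pi2 k * Pi2 k = Pi2 k)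
    (hPi2_orth : ∀ k j, k ≠ j → Pi2 k * Pi2 j = 0)
    (h : ℕ → ℝ)
    (HL : ℕ → H →L[ℂ] H)
    (hHL : ∀ L, HL L = ∑ k ∈ Finset.range (L + 1), (h k : ℂ) • Pi2 k)
    (n : ℕ)
    (s : ℕ → ℝ) (hs : ∀ l, 0 < s l)
    (hs_mono : Antitone fun l => (s l ^ n)⁻¹)
    (hs_sum : Summable fun l => (s l ^ n)⁻¹)
    (R : H →L[ℂ] H)
    (hR : ∀ l, R * P l = (((s l ^ n)⁻¹ : ℝ) : ℂ) • P l)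
    (β : ℕ → ℝ) (hβ_sum : Summable β)
    (hPPi2_zero : ∀ l k, l < k → P l * Pi2 k = 0)
    (hPPi2_bound : ∀ k j : ℕ, ‖P (k + j) * Pi2 k‖ ≤ β j)
    (t : ℝ) :
    (∀ M L : ℕ, M ≤ L →
      ‖R * (exp ((Complex.I * t) • HL L) - exp ((Complex.I * t) • HL M))‖ ≤
        2 * (∑' j, β j) * (∑ k ∈ Finset.Ioc M L, (s k ^ n)⁻¹)) ∧
    (∀ ε > (0 : ℝ), ∃ N : ℕ, ∀ L ≥ N, ∀ M ≥ N,
      ‖R * (exp ((Complex.I * t) • HL L) - exp ((Complex.I * t) • HL M))‖ < ε) := by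
  have hphase : ∀ L, (Complex.I * t) • HL L =
      ∑ k ∈ range (L + 1), (((t * h k : ℝ) : ℂ) * Complex.I) • Pi2 k := fun L => by
    rw [hHL, smul_sum]
    refine sum_congr rfl fun k _ => ?_
    rw [smul_smul]
    congr 1
    push_cast
    ring
  have hσ_nonneg : ∀ l, 0 ≤ (s l ^ n)⁻¹ := fun l => by have := hs l; positivity
  have hRPi2 : ∀ k, ‖R * Pi2 k‖ ≤ (s k ^ n)⁻¹ * ∑' j, β j := fun k =>
    norm_mul_le_of_banded hP_complete hR hσ_nonneg hs_mono
      (fun l hl => hPPi2_zero l k hl) hβ_sum (hPPi2_bound k)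
  have hbound : ∀ M L : ℕ, M ≤ L →
      ‖R * (exp ((Complex.I * t) • HL L) - exp ((Complex.I * t) • HL M))‖ ≤
        2 * (∑' j, β j) * (∑ k ∈ Finset.Ioc M L, (s k ^ n)⁻¹) := fun M L hML =>
    calc _ ≤ 2 * ∑ k ∈ Ioc M L, ‖R * Pi2 k‖ := by
          rw [hphase, hphase]
          exact norm_mul_exp_sub_exp_le hPi2_idem hPi2_orth _ R hML
      _ ≤ 2 * ∑ k ∈ Ioc M L, (s k ^ n)⁻¹ * ∑' j, β j := by gcongr with k; exact hRPi2 k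
      _ = _ := by rw [← sum_mul]; ring
  have hcauchy : CauchySeq fun L => R * exp ((Complex.I * t) • HL L) :=
    cauchySeq_of_dist_le_mul_sum_Ioc hs_sum hσ_nonneg
      fun M L hML => by simpa only [dist_eq_norm, ← mul_sub] using hbound M L hML
  refine ⟨hbound, fun ε hε => ?_⟩
  simpa only [dist_eq_norm, ← mul_sub] using Metric.cauchySeq_iff.mp hcauchy ε hε

/-- (Example 3 of Section IV of the paper, condition (ex1).)
Here the Hamiltonians `H_L = Σ_{k≤L} h_k Pi2_k` are built from a spectral family
`(Pi2_k)` different from the family `(P_l)` diagonalizing `S`. If `P_l Π_k = 0`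
for `l < k` and `‖P_{k+j} Pi2_k‖ ≤ β_j` with `(β_j) ∈ ℓ¹`, and `(s_l^{-n})` is
nonincreasing and summable, then for `M ≤ L`,
`‖R (exp(i t H_L) − exp(i t H_M))‖ ≤ 2 (Σ_j β_j)(Σ_{k=M+1}^L s_k^{-n})`, and
consequently `‖R (exp(i t H_L) − exp(i t H_M))‖ → 0` as `L, M → ∞`. -/
theorem stmt_18 {H : Type*} [NormedAddCommGroup H] [InnerProductSpace ℂ H] [CompleteSpace H]
    (P : ℕ → H →L[ℂ] H)
    (hP_sa : ∀ l, IsSelfAdjoint (P l))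
    (hP_idem : ∀ l, P l * P l = P l)
    (hP_orth : ∀ l k, l ≠ k → P l * P k = 0)
    (hP_complete : ∀ x : H, HasSum (fun l => P l x) x)
    (Pi2 : ℕ → H →L[ℂ] H)
    (hPi2_sa : ∀ k, IsSelfAdjoint (Pi2 k))
    (hPi2_idem : ∀ k, Pi2 k * Pi2 k = Pi2 k)
    (hPi2_orth : ∀ k j, k ≠ j → Pi2 k * Pi2 j = 0)
    (h : ℕ → ℝ)
    (HL : ℕ → H →L[ℂ] H)
    (hHL : ∀ L, HL L = ∑ k ∈ Finset.range (L + 1), (h k : ℂ) • Pi2 k)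
    (n : ℕ) (hn : 1 ≤ n)
    (s : ℕ → ℝ) (hs : ∀ l, 0 < s l)
    (hs_mono : Antitone fun l => (s l ^ n)⁻¹)
    (hs_sum : Summable fun l => (s l ^ n)⁻¹)
    (R : H →L[ℂ] H)
    (hR : ∀ l, R * P l = (((s l ^ n)⁻¹ : ℝ) : ℂ) • P l)
    (β : ℕ → ℝ) (hβ_nonneg : ∀ j, 0 ≤ β j) (hβ_sum : Summable β)
    (hPPi2_zero : ∀ l k, l < k → P l * Pi2 k = 0)
    (hPPi2_bound : ∀ k j : ℕ, ‖P (k + j) * Pi2 k‖ ≤ β j)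
    (t : ℝ) :
    (∀ M L : ℕ, M ≤ L →
      ‖R * (exp ((Complex.I * t) • HL L) - exp ((Complex.I * t) • HL M))‖ ≤
        2 * (∑' j, β j) * (∑ k ∈ Finset.Ioc M L, (s k ^ n)⁻¹)) ∧
    (∀ ε > (0 : ℝ), ∃ N : ℕ, ∀ L ≥ N, ∀ M ≥ N,
      ‖R * (exp ((Complex.I * t) • HL L) - exp ((Complex.I * t) • HL M))‖ < ε) :=
  stmt_18_general P hP_complete Pi2 hPi2_idem hPi2_orth h HL hHL n s hs hs_mono hs_sum R hR β hβ_sum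
    hPPi2_zero hPPi2_bound t
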